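/- Let 𝒜 be a Hilbert evolution algebra with a natural orthonormal basis 𝓑 = {e_i}_{i∈ℕ}. If 𝒜 is nil, then there are no oriented cycles in G(𝒜,𝓑) and δ(G_i(𝒜,𝓑)) < ∞ for every i ∈ ℕ. -/

import Mathlib

noncomputable section

open scoped ENat

/-! ### Digraph notions associated to a matrix of structural constants

The associated digraph `G(𝒜,𝓑)` has vertex set `ℕ` and a directed edge `(i,k)` iff
`ω i k ≠ 0`. -/

/-- `DsetU ω m U` is the set `D^m(U)` of `m`-th generation descendants of `U`:
`D^0(U) = U` and `D^{m+1}(U) = {k | ∃ i ∈ D^m(U), ω i k ≠ 0}`. -/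
def DsetU (ω : ℕ → ℕ → ℂ) : ℕ → Set ℕ → Set ℕ
  | 0, U => U
  | m + 1, U => {k | ∃ i ∈ DsetU ω m U, ω i k ≠ 0}

/-- `Dm ω m i = D^m(i)`, the `m`-th generation descendants of the vertex `i`. -/
def Dm (ω : ℕ → ℕ → ℂ) (m i : ℕ) : Set ℕ := DsetU ω m {i}

/-- `Desc ω i = D(i) = ⋃_{m ≥ 1} D^m(i)`, the set of descendants of `i`. -/
def Desc (ω : ℕ → ℕ → ℂ) (i : ℕ) : Set ℕ := ⋃ m ∈ {m : ℕ | 1 ≤ m}, Dm ω m i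

/-- `gdist ω i u` is the length of a shortest directed path (walk) from `i` to `u`. -/
def gdist (ω : ℕ → ℕ → ℂ) (i u : ℕ) : ℕ := sInf {n : ℕ | u ∈ Dm ω n i}

/-- The depth `δ(G_i) = sup {dist(i,u) : u ∈ D(i)}` of the subgraph `G_i` induced on the
descendants of `i`, as an extended natural number (`⊤` when unbounded). -/
def depth (ω : ℕ → ℕ → ℂ) (i : ℕ) : ℕ∞ := ⨆ u ∈ Desc ω i, (gdist ω i u : ℕ∞)

/-- `p 0, p 1, …, p n` is an oriented cycle: a non-empty directed path in which the only
repeated vertices are the first and the last one. -/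
def IsOrientedCycle (ω : ℕ → ℕ → ℂ) (n : ℕ) (p : ℕ → ℕ) : Prop :=
  0 < n ∧ (∀ m < n, ω (p m) (p (m + 1)) ≠ 0) ∧ p n = p 0 ∧
    ∀ a b, a < b → b < n → p a ≠ p b

/-- The digraph associated to `ω` contains an oriented cycle. -/
def HasOrientedCycle (ω : ℕ → ℕ → ℂ) : Prop := ∃ n p, IsOrientedCycle ω n p

/-! ### Algebra notions -/

variable {H : Type*} [NormedAddCommGroup H] [InnerProductSpace ℂ H] [CompleteSpace H]

/-- The structural constants of a Hilbert evolution algebra with product `mul` relative to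
the natural orthonormal basis `e`: `ω i k` is the `k`-th coordinate of `e i · e i`,
so that `e i · e i = ∑'_k ω i k • e k`. -/
def structConst (mul : H →ₗ[ℂ] H →ₗ[ℂ] H) (e : HilbertBasis ℕ ℂ H) (i k : ℕ) : ℂ :=
  e.repr (mul (e i) (e i)) k

/-- Principal powers: `ppow mul v n = v^n` for `n ≥ 1` (with the junk value `v` at `n = 0`):
`v^1 = v` and `v^{n+1} = v^n · v`. -/
def ppow (mul : H →ₗ[ℂ] H →ₗ[ℂ] H) (v : H) : ℕ → H
  | 0 => v
  | 1 => v
  | n + 2 => mul (ppow mul v (n + 1)) v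

/-- The algebra is nil: every element has a vanishing principal power. -/
def IsNil (mul : H →ₗ[ℂ] H →ₗ[ℂ] H) : Prop := ∀ v : H, ∃ n : ℕ, 1 ≤ n ∧ ppow mul v n = 0

/-- The product `S·T` of two subspaces: the span of all products `x·y`, `x ∈ S`, `y ∈ T`. -/
def mulSub (mul : H →ₗ[ℂ] H →ₗ[ℂ] H) (S T : Submodule ℂ H) : Submodule ℂ H :=
  Submodule.span ℂ {z : H | ∃ x ∈ S, ∃ y ∈ T, z = mul x y}

/-- The powers `𝒜^n` (for `n ≥ 1`, with the junk value `⊤` at `n = 0`):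
`𝒜^1 = 𝒜` and `𝒜^{n+1} = ∑_{i=1}^{n} 𝒜^i 𝒜^{n+1-i}`. -/
def apow (mul : H →ₗ[ℂ] H →ₗ[ℂ] H) (n : ℕ) : Submodule ℂ H :=
  n.strongRecOn fun n ih =>
    match n, ih with
    | 0, _ => ⊤
    | 1, _ => ⊤
    | m + 2, ih =>
      ⨆ (i : ℕ) (h1 : 1 ≤ i) (h2 : i ≤ m + 1),
        mulSub mul (ih i (by omega)) (ih (m + 2 - i) (by omega))

/-- The algebra is nilpotent: `𝒜^n = 0` for some `n`. -/
def IsNilpotent' (mul : H →ₗ[ℂ] H →ₗ[ℂ] H) : Prop := ∃ n : ℕ, 1 ≤ n ∧ apow mul n = ⊥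

/-- The right powers `𝒜^{<n>}` (for `n ≥ 1`, with the junk value `⊤` at `n = 0`):
`𝒜^{<1>} = 𝒜` and `𝒜^{<n+1>} = 𝒜^{<n>}𝒜`. -/
def rapow (mul : H →ₗ[ℂ] H →ₗ[ℂ] H) : ℕ → Submodule ℂ H
  | 0 => ⊤
  | 1 => ⊤
  | n + 2 => mulSub mul (rapow mul (n + 1)) ⊤

/-- The algebra is right nilpotent: `𝒜^{<n>} = 0` for some `n`. -/
def IsRightNilpotent (mul : H →ₗ[ℂ] H →ₗ[ℂ] H) : Prop := ∃ n : ℕ, 1 ≤ n ∧ rapow mul n = ⊥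

/-- The index of right nilpotency `n_r(𝒜) = min {n : 𝒜^{<n>} = 0}`. -/
def rNilIndex (mul : H →ₗ[ℂ] H →ₗ[ℂ] H) : ℕ := sInf {n : ℕ | 1 ≤ n ∧ rapow mul n = ⊥}

/-- Powers of a subset `I ⊆ 𝒜` (for `n ≥ 1`, with the junk value `I` at `n = 0`):
`I^{<1>} = I` and `I^{<n+1>}` is the set of finite sums `∑_j x_j · y_j` with
`x_j ∈ I^{<n>}` and `y_j ∈ I`. -/
def setPow (mul : H →ₗ[ℂ] H →ₗ[ℂ] H) (I : Set H) : ℕ → Set H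
  | 0 => I
  | 1 => I
  | n + 2 => {v : H | ∃ (m : ℕ) (x y : Fin m → H),
      (∀ j, x j ∈ setPow mul I (n + 1)) ∧ (∀ j, y j ∈ I) ∧
        v = ∑ j, mul (x j) (y j)}

end

/-! If `ω` are the structure constants, then for `v = ∑_{j ∈ s} e j` the principal powers satisfy
`(v ^ (m + 1))_c = ∑_{j ∈ s} (v ^ m)_j ω j c`. Along a walk `κ` in `s` whose vertices have no
in-neighbour in `s` other than their predecessor this sum has a single term, so
`(v ^ (m + 1))_{κ m} ≠ 0`. A shortest closed walk, run around periodically, is such a walk of every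
length, so a cycle contradicts nilness.

By Baire's theorem some closed set `{v | v ^ (N + 1) = 0}` has interior, and since
`t ↦ (v₀ + t • (w - v₀)) ^ (N + 1)` is entire (the product is jointly continuous by the closed
graph theorem), `v ^ (N + 1) = 0` for all `v`. In a digraph without closed walks a shortest path
to a vertex at distance `d` is again such a walk, of length `d`, so every distance is at most `N`.
-/

open Function Filter Topology

section Digraph

variable {ω : ℕ → ℕ → ℂ}

theorem mem_dm_succ {n i j k : ℕ} (hj : j ∈ Dm ω n i) (hjk : ω j k ≠ 0) :
    k ∈ Dm ω (n + 1) i :=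
  ⟨j, hj, hjk⟩

theorem mem_dm_add {a b i x u : ℕ} (hx : x ∈ Dm ω a i) (hu : u ∈ Dm ω b x) :
    u ∈ Dm ω (a + b) i := by
  induction b generalizing u with
  | zero => rwa [Set.mem_singleton_iff.mp hu]
  | succ b ih =>
    obtain ⟨y, hy, hyu⟩ := hu
    exact mem_dm_succ (ih hy) hyu

theorem mem_dm_of_walk {f : ℕ → ℕ} {x k : ℕ}
    (hf : ∀ t < k, ω (f (x + t)) (f (x + t + 1)) ≠ 0) : f (x + k) ∈ Dm ω k (f x) := by
  induction k with
  | zero => exact Set.mem_singleton _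
  | succ k ih => exact mem_dm_succ (ih fun t ht => hf t (by omega)) (hf k k.lt_succ_self)

theorem exists_walk_of_mem_dm {n i u : ℕ} (hu : u ∈ Dm ω n i) :
    ∃ f : ℕ → ℕ, f 0 = i ∧ f n = u ∧ ∀ t < n, ω (f t) (f (t + 1)) ≠ 0 := by
  induction n generalizing u with
  | zero => exact ⟨fun _ => i, rfl, (Set.mem_singleton_iff.mp hu).symm, by simp⟩
  | succ n ih =>
    obtain ⟨y, hy, hyu⟩ := hu
    obtain ⟨f, hf0, hfn, hf⟩ := ih hy
    refine ⟨fun t => if t ≤ n then f t else u, by simp [hf0], by simp, fun t ht => ?_⟩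
    rcases Nat.lt_succ_iff_lt_or_eq.mp ht with ht | rfl
    · simpa [ht.le, Nat.succ_le_of_lt ht] using hf t ht
    · simpa [hfn] using hyu

theorem IsOrientedCycle.mem_dm_self {n : ℕ} {p : ℕ → ℕ} (hp : IsOrientedCycle ω n p) :
    p 0 ∈ Dm ω n (p 0) := by
  obtain ⟨-, hedge, hclosed, -⟩ := hp
  have hwalk := mem_dm_of_walk (f := p) (x := 0) (k := n) (by simpa using hedge)
  rwa [zero_add, hclosed] at hwalk

theorem Function.Periodic.exists_lt_apply_eq_apply_add {α : Type*} {κ : ℕ → α} {r : ℕ}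
    (hκ : Periodic κ r) (hr : 0 < r) (a b : ℕ) : ∃ k < r, κ a = κ (b + k) := by
  set c := a + b * r - b
  refine ⟨c % r, Nat.mod_lt c hr, ?_⟩
  have hbr : b ≤ b * r := Nat.le_mul_of_pos_right b hr
  calc κ a = κ (a + b * r) := (hκ.nat_mul b a).symm
    _ = κ (b + c % r + c / r * r) := by
      congr 1
      have := Nat.mod_add_div' c r
      omega
    _ = κ (b + c % r) := hκ.nat_mul _ _

theorem exists_periodic_walk_of_mem_dm_self {i r : ℕ} (hr : 0 < r) (hi : i ∈ Dm ω r i) :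
    ∃ κ : ℕ → ℕ, Periodic κ r ∧ ∀ m, ω (κ m) (κ (m + 1)) ≠ 0 := by
  obtain ⟨f, hf0, hfr, hf⟩ := exists_walk_of_mem_dm hi
  set κ : ℕ → ℕ := fun m => f (m % r) with hκ_def
  have hκ : Periodic κ r := fun m => by simp [hκ_def]
  have hagree : ∀ t ≤ r, κ t = f t := by
    intro t ht
    rcases ht.lt_or_eq with ht | rfl
    · simp [hκ_def, Nat.mod_eq_of_lt ht]
    · simp [hκ_def, hf0, hfr]
  refine ⟨κ, hκ, fun m => ?_⟩
  have hsucc : κ (m + 1) = f (m % r + 1) := by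
    rw [← hκ.map_mod_nat, ← Nat.mod_add_mod, hκ.map_mod_nat, hagree _ (Nat.mod_lt m hr)]
  rw [hsucc]
  exact hf _ (Nat.mod_lt m hr)

theorem eq_pred_of_periodic_walk {κ : ℕ → ℕ} {r : ℕ} (hκ : Periodic κ r) (hr : 0 < r)
    (hwalk : ∀ m, ω (κ m) (κ (m + 1)) ≠ 0) (hmin : ∀ n < r, 0 < n → ∀ i, i ∉ Dm ω n i)
    {a m : ℕ} (h : ω (κ a) (κ (m + 1)) ≠ 0) : κ a = κ m := by
  obtain ⟨k, hk, hka⟩ := hκ.exists_lt_apply_eq_apply_add hr a (m + 1)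
  have hclosed : κ (m + 1) ∈ Dm ω (k + 1) (κ (m + 1)) :=
    mem_dm_succ (hka ▸ mem_dm_of_walk fun t _ => hwalk _) h
  have hkr : k + 1 = r := by
    by_contra hne
    exact hmin (k + 1) (by omega) k.succ_pos _ hclosed
  rw [hka, show m + 1 + k = m + r by omega, hκ m]

theorem succ_eq_of_shortest_walk (hacyc : ∀ n i, 0 < n → i ∉ Dm ω n i) {f : ℕ → ℕ} {d : ℕ}
    (hf : ∀ t < d, ω (f t) (f (t + 1)) ≠ 0) (hshort : ∀ n, f d ∈ Dm ω n (f 0) → d ≤ n)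
    {a b : ℕ} (ha : a ≤ d) (hb : b ≤ d) (h : ω (f a) (f b) ≠ 0) : b = a + 1 := by
  have hseg : ∀ x y, x ≤ y → y ≤ d → f y ∈ Dm ω (y - x) (f x) := fun x y hxy hy => by
    simpa [Nat.add_sub_cancel' hxy] using
      mem_dm_of_walk (f := f) (x := x) (k := y - x) fun t ht => hf _ (by omega)
  -- A backward chord closes a walk; a forward chord skipping a vertex shortens `f`.
  rcases le_or_gt b a with hba | hab
  · exact absurd (mem_dm_succ (hseg b a hba ha) h) (hacyc _ _ (by omega))
  · have hlen := hshort _ (mem_dm_add (mem_dm_succ (hseg 0 a a.zero_le ha) h) (hseg b d hb le_rfl))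
    omega

end Digraph

theorem mul_basis_eq_repr_smul {E : Type*} [NormedAddCommGroup E] [InnerProductSpace ℂ E]
    (mul : E →ₗ[ℂ] E →ₗ[ℂ] E) (e : HilbertBasis ℕ ℂ E)
    (hcont : ∀ x : E, Continuous fun y => mul x y)
    (hnat : ∀ i j : ℕ, i ≠ j → mul (e i) (e j) = 0) (j : ℕ) (x : E) :
    mul (e j) x = e.repr x j • mul (e j) (e j) := by
  let T : E →L[ℂ] E := ⟨mul (e j), hcont (e j)⟩
  have hsingle : HasSum (fun k => T (e.repr x k • e k)) (T (e.repr x j • e j)) :=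
    hasSum_single j fun k hk => by simp [T, hnat j k hk.symm]
  simpa [T] using (T.hasSum (e.hasSum_repr x)).unique hsingle

section Algebra

variable {H : Type*} [NormedAddCommGroup H] [InnerProductSpace ℂ H]
variable (mul : H →ₗ[ℂ] H →ₗ[ℂ] H)

section Complete

variable [CompleteSpace H]

theorem exists_clm₂_eq (hcomm : ∀ x y : H, mul x y = mul y x)
    (hcont : ∀ x : H, Continuous fun y => mul x y) :
    ∃ B : H →L[ℂ] H →L[ℂ] H, ∀ x y, B x y = mul x y := by
  let Φ : H →ₗ[ℂ] H →L[ℂ] H :=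
    { toFun := fun x => ⟨mul x, hcont x⟩
      map_add' := fun x y => by ext; simp
      map_smul' := fun c x => by ext; simp }
  refine ⟨⟨Φ, Φ.continuous_of_seq_closed_graph fun u x S hu hS => ?_⟩, fun _ _ => rfl⟩
  ext y
  have hS_y : Tendsto (fun n => mul (u n) y) atTop (𝓝 (S y)) :=
    ((ContinuousLinearMap.apply ℂ H y).continuous.tendsto S).comp hS
  have hx_y : Tendsto (fun n => mul (u n) y) atTop (𝓝 (mul x y)) := by
    simp_rw [hcomm _ y]
    exact ((hcont y).tendsto x).comp hu
  exact tendsto_nhds_unique hS_y hx_y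

theorem differentiable_ppow (hcomm : ∀ x y : H, mul x y = mul y x)
    (hcont : ∀ x : H, Continuous fun y => mul x y) (n : ℕ) :
    Differentiable ℂ fun v => ppow mul v n := by
  obtain ⟨B, hB⟩ := exists_clm₂_eq mul hcomm hcont
  induction n using Nat.strong_induction_on with
  | _ n ih =>
    match n, ih with
    | 0, _ => exact differentiable_id
    | 1, _ => exact differentiable_id
    | n + 2, ih =>
      show Differentiable ℂ fun v => mul (ppow mul v (n + 1)) v
      simp_rw [← hB]
      exact (B.differentiable.comp (ih (n + 1) (by omega))).clm_apply differentiable_id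

theorem ppow_eq_zero_of_mem_interior (hcomm : ∀ x y : H, mul x y = mul y x)
    (hcont : ∀ x : H, Continuous fun y => mul x y) {n : ℕ} {v₀ : H}
    (hv₀ : v₀ ∈ interior {v | ppow mul v n = 0}) (w : H) : ppow mul w n = 0 := by
  set g : ℂ → H := fun t => ppow mul (v₀ + t • (w - v₀)) n
  have hg : Differentiable ℂ g := (differentiable_ppow mul hcomm hcont n).comp (by fun_prop)
  have hg₀ : g =ᶠ[𝓝 0] 0 := by
    have hline : ContinuousAt (fun t : ℂ => v₀ + t • (w - v₀)) 0 := by fun_prop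
    have hv₀' : interior {v | ppow mul v n = 0} ∈ 𝓝 (v₀ + (0 : ℂ) • (w - v₀)) := by
      simpa only [zero_smul, add_zero] using isOpen_interior.mem_nhds hv₀
    filter_upwards [hline.preimage_mem_nhds hv₀'] with t ht
    exact (interior_subset ht : _ ∈ {v | ppow mul v n = 0})
  have := AnalyticOnNhd.eqOn_zero_of_preconnected_of_eventuallyEq_zero
    (fun z _ => hg.analyticAt z) isPreconnected_univ (Set.mem_univ 0) hg₀ (Set.mem_univ 1)
  simpa [g] using this

theorem exists_ppow_succ_eq_zero (hcomm : ∀ x y : H, mul x y = mul y x)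
    (hcont : ∀ x : H, Continuous fun y => mul x y) (hnil : IsNil mul) :
    ∃ N, ∀ v, ppow mul v (N + 1) = 0 := by
  have hclosed (n : ℕ) : IsClosed {v | ppow mul v (n + 1) = 0} :=
    isClosed_eq (differentiable_ppow mul hcomm hcont _).continuous continuous_const
  have hcover : ⋃ n, {v | ppow mul v (n + 1) = 0} = Set.univ := by
    refine Set.eq_univ_of_forall fun v => Set.mem_iUnion.mpr ?_
    obtain ⟨n, hn, hv⟩ := hnil v
    exact ⟨n - 1, by rwa [Nat.sub_add_cancel hn]⟩
  obtain ⟨N, v₀, hv₀⟩ := nonempty_interior_of_iUnion_of_closed hclosed hcover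
  exact ⟨N, ppow_eq_zero_of_mem_interior mul hcomm hcont hv₀⟩

end Complete

variable (e : HilbertBasis ℕ ℂ H)

theorem repr_mul_sum_basis (hcomm : ∀ x y : H, mul x y = mul y x)
    (hcont : ∀ x : H, Continuous fun y => mul x y)
    (hnat : ∀ i j : ℕ, i ≠ j → mul (e i) (e j) = 0) (s : Finset ℕ) (x : H) (c : ℕ) :
    e.repr (mul x (∑ j ∈ s, e j)) c = ∑ j ∈ s, e.repr x j * structConst mul e j c := by
  rw [map_sum, e.repr_apply_apply, inner_sum]
  refine Finset.sum_congr rfl fun j _ => ?_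
  rw [hcomm, mul_basis_eq_repr_smul mul e hcont hnat, inner_smul_right, ← e.repr_apply_apply]
  rfl

theorem ppow_sum_basis_ne_zero (hcomm : ∀ x y : H, mul x y = mul y x)
    (hcont : ∀ x : H, Continuous fun y => mul x y)
    (hnat : ∀ i j : ℕ, i ≠ j → mul (e i) (e j) = 0) (s : Finset ℕ) (κ : ℕ → ℕ) (M : ℕ)
    (hκ : ∀ m ≤ M, κ m ∈ s) (hedge : ∀ m < M, structConst mul e (κ m) (κ (m + 1)) ≠ 0)
    (hpred : ∀ m < M, ∀ j ∈ s, structConst mul e j (κ (m + 1)) ≠ 0 → j = κ m) :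
    ppow mul (∑ j ∈ s, e j) (M + 1) ≠ 0 := by
  set v := ∑ j ∈ s, e j
  suffices h : ∀ m ≤ M, e.repr (ppow mul v (m + 1)) (κ m) ≠ 0 by
    intro hzero
    simpa [hzero] using h M le_rfl
  intro m hm
  induction m with
  | zero =>
    have hself : ∀ i j, inner ℂ (e i) (e j) = if i = j then 1 else 0 :=
      orthonormal_iff_ite.mp e.orthonormal
    show e.repr v (κ 0) ≠ 0
    rw [e.repr_apply_apply, inner_sum]
    simp [hself, hκ 0 hm]
  | succ m ih =>
    show e.repr (mul (ppow mul v (m + 1)) v) (κ (m + 1)) ≠ 0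
    rw [repr_mul_sum_basis mul e hcomm hcont hnat,
      Finset.sum_eq_single_of_mem (κ m) (hκ m (by omega))]
    · exact mul_ne_zero (ih (by omega)) (hedge m (by omega))
    · intro j hj hne
      exact mul_eq_zero_of_right _ (not_ne_iff.mp fun h => hne (hpred m (by omega) j hj h))

theorem not_mem_dm_self_of_isNil (hcomm : ∀ x y : H, mul x y = mul y x)
    (hcont : ∀ x : H, Continuous fun y => mul x y)
    (hnat : ∀ i j : ℕ, i ≠ j → mul (e i) (e j) = 0) (hnil : IsNil mul) :
    ∀ n i, 0 < n → i ∉ Dm (structConst mul e) n i := by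
  classical
  intro n i hn hi
  have hclosed : ∃ r, 0 < r ∧ ∃ i, i ∈ Dm (structConst mul e) r i := ⟨n, hn, i, hi⟩
  set r := Nat.find hclosed
  obtain ⟨hr, j, hj⟩ := Nat.find_spec hclosed
  have hmin : ∀ n < r, 0 < n → ∀ i, i ∉ Dm (structConst mul e) n i :=
    fun n hnr hn i hi => Nat.find_min hclosed hnr ⟨hn, i, hi⟩
  obtain ⟨κ, hκ, hwalk⟩ := exists_periodic_walk_of_mem_dm_self hr hj
  set s := (Finset.range r).image κ
  have hκs (m : ℕ) : κ m ∈ s :=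
    Finset.mem_image.mpr ⟨m % r, Finset.mem_range.mpr (Nat.mod_lt m hr), hκ.map_mod_nat m⟩
  obtain ⟨N, hN, hzero⟩ := hnil (∑ j ∈ s, e j)
  refine ppow_sum_basis_ne_zero mul e hcomm hcont hnat s κ (N - 1) (fun m _ => hκs m)
    (fun m _ => hwalk m) (fun m _ j hj hjm => ?_) (by rwa [Nat.sub_add_cancel hN])
  obtain ⟨a, -, rfl⟩ := Finset.mem_image.mp hj
  exact eq_pred_of_periodic_walk hκ hr hwalk hmin hjm

theorem gdist_le_of_ppow_eq_zero (hcomm : ∀ x y : H, mul x y = mul y x)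
    (hcont : ∀ x : H, Continuous fun y => mul x y)
    (hnat : ∀ i j : ℕ, i ≠ j → mul (e i) (e j) = 0)
    (hacyc : ∀ n i, 0 < n → i ∉ Dm (structConst mul e) n i) {N : ℕ}
    (hN : ∀ v, ppow mul v (N + 1) = 0) {i u : ℕ} (hu : u ∈ Desc (structConst mul e) i) :
    gdist (structConst mul e) i u ≤ N := by
  obtain ⟨m, -, hm⟩ : ∃ m, 1 ≤ m ∧ u ∈ Dm (structConst mul e) m i := by simpa [Desc] using hu
  set d := gdist (structConst mul e) i u
  have hd : u ∈ Dm (structConst mul e) d i := Nat.sInf_mem (s := {n | u ∈ Dm _ n i}) ⟨m, hm⟩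
  obtain ⟨f, hf0, hfd, hf⟩ := exists_walk_of_mem_dm hd
  have hshort : ∀ n, f d ∈ Dm (structConst mul e) n (f 0) → d ≤ n := fun n hn =>
    Nat.sInf_le (by rwa [hfd, hf0] at hn)
  by_contra! hNd
  refine ppow_sum_basis_ne_zero mul e hcomm hcont hnat ((Finset.range (N + 1)).image f) f N
    (fun m hm => Finset.mem_image_of_mem f (Finset.mem_range.mpr (by omega)))
    (fun m hm => hf m (by omega)) (fun m hm j hj hjm => ?_) (hN _)
  obtain ⟨a, ha, rfl⟩ := Finset.mem_image.mp hj
  have hsucc : m + 1 = a + 1 := succ_eq_of_shortest_walk hacyc hf hshort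
    ((Nat.le_of_lt_succ (Finset.mem_range.mp ha)).trans hNd.le) (by omega) hjm
  exact congrArg f (by omega)

end Algebra

noncomputable section

variable {H : Type*} [NormedAddCommGroup H] [InnerProductSpace ℂ H] [CompleteSpace H]

/-- Let `𝒜` be a complex separable Hilbert evolution algebra with natural
orthonormal basis `𝓑 = {e i}`. If `𝒜` is nil, then there are no oriented cycles in
`G(𝒜,𝓑)` and `δ(G_i(𝒜,𝓑)) < ∞` for every `i ∈ ℕ`. -/
theorem stmt_12
    (mul : H →ₗ[ℂ] H →ₗ[ℂ] H)
    (hcomm : ∀ x y : H, mul x y = mul y x)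
    (hcont : ∀ x : H, Continuous fun y => mul x y)
    (e : HilbertBasis ℕ ℂ H)
    (hnat : ∀ i j : ℕ, i ≠ j → mul (e i) (e j) = 0)
    (ω : ℕ → ℕ → ℂ)
    (hω : ∀ i k : ℕ, ω i k = structConst mul e i k)
    (hnil : IsNil mul) :
    ¬ HasOrientedCycle ω ∧ ∀ i : ℕ, depth ω i < ⊤ := by
  obtain rfl : ω = structConst mul e := funext₂ hω
  have hacyc := not_mem_dm_self_of_isNil mul e hcomm hcont hnat hnil
  obtain ⟨N, hN⟩ := exists_ppow_succ_eq_zero mul hcomm hcont hnil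
  refine ⟨fun ⟨n, p, hp⟩ => hacyc n (p 0) hp.1 hp.mem_dm_self, fun i => ?_⟩
  calc depth (structConst mul e) i
      ≤ N := iSup₂_le fun u hu =>
        Nat.cast_le.mpr (gdist_le_of_ppow_eq_zero mul e hcomm hcont hnat hacyc hN hu)
    _ < ⊤ := ENat.natCast_lt_top N

end
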